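/- Let F, G, H, I be finite groups and A a multiplicatively written abelian group. Let (U,μ), (V,ν), (W,ω) be A-subcharacters of F × G, G × H, H × I respectively. Then the following three conditions are equivalent: (i) (U,μ) ∼ (V,ν) and (U*V, μ*ν) ∼ (W,ω); (ii) (V,ν) ∼ (W,ω) and (U,μ) ∼ (V*W, ν*ω); (iii) for all g ∈ G and h ∈ H with (1,g) ∈ U, (g,h) ∈ V and (h,1) ∈ W, one has μ(1,g)·ν(g,h)·ω(h,1) = 1. -/

import Mathlib

open scoped Pointwise

section StarPrelude

variable {F G H I : Type*} [Group F] [Group G] [Group H] [Group I]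
variable {A : Type*} [CommGroup A]

/-- The star product of subgroups `U ≤ F × G` and `V ≤ G × H`. -/
def starProd (U : Subgroup (F × G)) (V : Subgroup (G × H)) : Subgroup (F × H) where
  carrier := {p | ∃ g : G, (p.1, g) ∈ U ∧ (g, p.2) ∈ V}
  one_mem' := ⟨1, U.one_mem, V.one_mem⟩
  mul_mem' := by
    rintro ⟨a, b⟩ ⟨c, d⟩ ⟨g, h1, h2⟩ ⟨g', h1', h2'⟩
    exact ⟨g * g', U.mul_mem h1 h1', V.mul_mem h2 h2'⟩
  inv_mem' := by
    rintro ⟨a, b⟩ ⟨g, h1, h2⟩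
    exact ⟨g⁻¹, U.inv_mem h1, V.inv_mem h2⟩

infixl:70 " ⋆ " => starProd

theorem mem_starProd {U : Subgroup (F × G)} {V : Subgroup (G × H)} {p : F × H} :
    p ∈ U ⋆ V ↔ ∃ g : G, (p.1, g) ∈ U ∧ (g, p.2) ∈ V := Iff.rfl

/-- `Γ(U,V) = {(f,g,h) : (f,g) ∈ U, (g,h) ∈ V}`. -/
def gammaSet (U : Subgroup (F × G)) (V : Subgroup (G × H)) : Set (F × G × H) :=
  {p | (p.1, p.2.1) ∈ U ∧ (p.2.1, p.2.2) ∈ V}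

/-- `Γ∩(U,V) = {g ∈ G : (1,g) ∈ U and (g,1) ∈ V}`. -/
def gammaCap (U : Subgroup (F × G)) (V : Subgroup (G × H)) : Set G :=
  {g | ((1 : F), g) ∈ U ∧ (g, (1 : H)) ∈ V}

/-- `p₁(U)`, the image of `U ≤ F × G` in `F`. -/
def proj1 (U : Subgroup (F × G)) : Subgroup F := U.map (MonoidHom.fst F G)

/-- `p₂(U)`, the image of `U ≤ F × G` in `G`. -/
def proj2 (U : Subgroup (F × G)) : Subgroup G := U.map (MonoidHom.snd F G)

/-- `k₁(U) = {f : (f,1) ∈ U}`. -/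
def ker1 (U : Subgroup (F × G)) : Set F := {f | (f, (1 : G)) ∈ U}

/-- `k₂(U) = {g : (1,g) ∈ U}`. -/
def ker2 (U : Subgroup (F × G)) : Set G := {g | ((1 : F), g) ∈ U}

end StarPrelude
section CharPrelude

variable {F G H I : Type*} [Group F] [Group G] [Group H] [Group I]
variable {A : Type*} [CommGroup A]

/-- The conjugate `ᵉU = e·U·e⁻¹` of a subgroup `U` of `E`. -/
def conjSub {E : Type*} [Group E] (e : E) (U : Subgroup E) : Subgroup E :=
  U.map (MulAut.conj e).toMonoidHom

/-- The conjugate `ᵉμ` of an `A`-character `μ : U → A`, defined by `ᵉμ(e·t·e⁻¹) = μ(t)`. -/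
def conjChar {E : Type*} [Group E] (e : E) {U : Subgroup E} (μ : U →* A) :
    conjSub e U →* A :=
  μ.comp ((MulAut.conj e).subgroupMap U).symm.toMonoidHom

/-- The matching relation `(U,μ) ∼ (V,ν)`: `μ(1,g)·ν(g,1) = 1` for all `g ∈ Γ∩(U,V)`. -/
def Matches {U : Subgroup (F × G)} {V : Subgroup (G × H)} (μ : U →* A) (ν : V →* A) : Prop :=
  ∀ (g : G) (hU : ((1 : F), g) ∈ U) (hV : (g, (1 : H)) ∈ V),
    μ ⟨(1, g), hU⟩ * ν ⟨(g, 1), hV⟩ = 1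

theorem charStar_aux {U : Subgroup (F × G)} {V : Subgroup (G × H)}
    {μ : U →* A} {ν : V →* A} (hm : Matches μ ν)
    (f : F) (k : H) (g g' : G)
    (h1 : (f, g) ∈ U) (h2 : (g, k) ∈ V) (h1' : (f, g') ∈ U) (h2' : (g', k) ∈ V) :
    μ ⟨(f, g), h1⟩ * ν ⟨(g, k), h2⟩ = μ ⟨(f, g'), h1'⟩ * ν ⟨(g', k), h2'⟩ := by
  have hx1 : ((1 : F), g * g'⁻¹) ∈ U := by
    have := U.mul_mem h1 (U.inv_mem h1')
    simpa [Prod.ext_iff] using this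
  have hx2 : (g * g'⁻¹, (1 : H)) ∈ V := by
    have := V.mul_mem h2 (V.inv_mem h2')
    simpa [Prod.ext_iff] using this
  have key := hm (g * g'⁻¹) hx1 hx2
  have e1 : (⟨(f, g), h1⟩ : U) = ⟨((1 : F), g * g'⁻¹), hx1⟩ * ⟨(f, g'), h1'⟩ := by
    apply Subtype.ext
    simp [Prod.ext_iff]
  have e2 : (⟨(g, k), h2⟩ : V) = ⟨(g * g'⁻¹, (1 : H)), hx2⟩ * ⟨(g', k), h2'⟩ := by
    apply Subtype.ext
    simp [Prod.ext_iff]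
  rw [e1, e2, map_mul, map_mul, mul_mul_mul_comm, key, one_mul]

/-- The underlying function of the star product `μ * ν` of two matching `A`-characters. -/
noncomputable def charStarFun {U : Subgroup (F × G)} {V : Subgroup (G × H)}
    (μ : U →* A) (ν : V →* A) (p : U ⋆ V) : A :=
  μ ⟨((p : F × H).1, (mem_starProd.mp p.2).choose), (mem_starProd.mp p.2).choose_spec.1⟩ *
    ν ⟨((mem_starProd.mp p.2).choose, (p : F × H).2), (mem_starProd.mp p.2).choose_spec.2⟩

theorem charStarFun_eq {U : Subgroup (F × G)} {V : Subgroup (G × H)}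
    {μ : U →* A} {ν : V →* A} (hm : Matches μ ν) (p : U ⋆ V) (g : G)
    (h1 : ((p : F × H).1, g) ∈ U) (h2 : (g, (p : F × H).2) ∈ V) :
    charStarFun μ ν p = μ ⟨((p : F × H).1, g), h1⟩ * ν ⟨(g, (p : F × H).2), h2⟩ :=
  charStar_aux hm _ _ _ _ _ _ h1 h2

/-- The star product `μ * ν : U * V → A` of two matching `A`-characters, characterized by
`(μ * ν)(f,h) = μ(f,g)·ν(g,h)` whenever `(f,g) ∈ U` and `(g,h) ∈ V`. -/
noncomputable def charStar {U : Subgroup (F × G)} {V : Subgroup (G × H)}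
    {μ : U →* A} {ν : V →* A} (hm : Matches μ ν) : (U ⋆ V : Subgroup (F × H)) →* A where
  toFun := charStarFun μ ν
  map_one' := by
    show charStarFun μ ν 1 = 1
    rw [charStarFun_eq hm 1 1 (by first | exact U.one_mem | simpa using U.one_mem) (by first | exact V.one_mem | simpa using V.one_mem)]
    have e1 : (⟨(((1 : U ⋆ V) : F × H).1, (1 : G)), by first | exact U.one_mem | simpa using U.one_mem⟩ : U) = 1 := by
      apply Subtype.ext; simp [Prod.ext_iff]
    have e2 : (⟨((1 : G), ((1 : U ⋆ V) : F × H).2), by first | exact V.one_mem | simpa using V.one_mem⟩ : V) = 1 := by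
      apply Subtype.ext; simp [Prod.ext_iff]
    rw [e1, e2, map_one, map_one, one_mul]
  map_mul' p q := by
    show charStarFun μ ν (p * q) = charStarFun μ ν p * charStarFun μ ν q
    obtain ⟨gp, hp1, hp2⟩ := mem_starProd.mp p.2
    obtain ⟨gq, hq1, hq2⟩ := mem_starProd.mp q.2
    have hpq1 : (((p * q : U ⋆ V) : F × H).1, gp * gq) ∈ U := by
      have := U.mul_mem hp1 hq1
      simpa [Prod.ext_iff] using this
    have hpq2 : (gp * gq, ((p * q : U ⋆ V) : F × H).2) ∈ V := by
      have := V.mul_mem hp2 hq2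
      simpa [Prod.ext_iff] using this
    rw [charStarFun_eq hm p gp hp1 hp2, charStarFun_eq hm q gq hq1 hq2,
      charStarFun_eq hm (p * q) (gp * gq) hpq1 hpq2]
    have e1 : (⟨(((p * q : U ⋆ V) : F × H).1, gp * gq), hpq1⟩ : U) =
        ⟨(((p : F × H)).1, gp), hp1⟩ * ⟨(((q : F × H)).1, gq), hq1⟩ := by
      apply Subtype.ext; simp [Prod.ext_iff]
    have e2 : (⟨(gp * gq, ((p * q : U ⋆ V) : F × H).2), hpq2⟩ : V) =
        ⟨(gp, ((p : F × H)).2), hp2⟩ * ⟨(gq, ((q : F × H)).2), hq2⟩ := by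
      apply Subtype.ext; simp [Prod.ext_iff]
    rw [e1, e2, map_mul, map_mul, mul_mul_mul_comm]

theorem charStar_apply {U : Subgroup (F × G)} {V : Subgroup (G × H)}
    {μ : U →* A} {ν : V →* A} (hm : Matches μ ν) (p : F × H) (hp : p ∈ U ⋆ V)
    (g : G) (h1 : (p.1, g) ∈ U) (h2 : (g, p.2) ∈ V) :
    charStar hm ⟨p, hp⟩ = μ ⟨(p.1, g), h1⟩ * ν ⟨(g, p.2), h2⟩ :=
  charStarFun_eq hm ⟨p, hp⟩ g h1 h2

end CharPrelude

/-- For `A`-subcharacters `(U,μ)`, `(V,ν)`, `(W,ω)` of `F × G`, `G × H`,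
`H × I`, the following are equivalent:
(i) `(U,μ) ∼ (V,ν)` and `(U*V, μ*ν) ∼ (W,ω)`;
(ii) `(V,ν) ∼ (W,ω)` and `(U,μ) ∼ (V*W, ν*ω)`;
(iii) for all `g, h` with `(1,g) ∈ U`, `(g,h) ∈ V`, `(h,1) ∈ W`:
`μ(1,g)·ν(g,h)·ω(h,1) = 1`. -/
theorem stmt8 {F G H I : Type*} [Group F] [Group G] [Group H] [Group I]
    [Finite F] [Finite G] [Finite H] [Finite I] {A : Type*} [CommGroup A]
    {U : Subgroup (F × G)} {V : Subgroup (G × H)} {W : Subgroup (H × I)}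
    (μ : U →* A) (ν : V →* A) (ω : W →* A) :
    ((∃ hm : Matches μ ν, Matches (charStar hm) ω) ↔
      (∃ hm : Matches ν ω, Matches μ (charStar hm))) ∧
    ((∃ hm : Matches μ ν, Matches (charStar hm) ω) ↔
      (∀ (g : G) (h : H) (hU : ((1 : F), g) ∈ U) (hV : (g, h) ∈ V)
        (hW : (h, (1 : I)) ∈ W),
        μ ⟨(1, g), hU⟩ * ν ⟨(g, h), hV⟩ * ω ⟨(h, 1), hW⟩ = 1)) := by
  set P3 : Prop := (∀ (g : G) (h : H) (hU : ((1 : F), g) ∈ U) (hV : (g, h) ∈ V)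
      (hW : (h, (1 : I)) ∈ W),
      μ ⟨(1, g), hU⟩ * ν ⟨(g, h), hV⟩ * ω ⟨(h, 1), hW⟩ = 1) with hP3
  have h13 : (∃ hm : Matches μ ν, Matches (charStar hm) ω) ↔ P3 := by
    constructor
    · rintro ⟨hm, hm2⟩ g h hU hV hW
      have hp : ((1 : F), h) ∈ U ⋆ V := ⟨g, hU, hV⟩
      have := hm2 h hp hW
      rwa [charStar_apply hm ((1 : F), h) hp g hU hV] at this
    · intro h3
      have hm : Matches μ ν := by
        intro g hU hV
        have hW : ((1 : H), (1 : I)) ∈ W := W.one_mem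
        have := h3 g 1 hU hV hW
        have e : (⟨((1 : H), (1 : I)), hW⟩ : W) = 1 := rfl
        rwa [e, map_one, mul_one] at this
      refine ⟨hm, ?_⟩
      intro h hp hW
      obtain ⟨g, hU, hV⟩ := hp
      have := h3 g h hU hV hW
      rwa [charStar_apply hm ((1 : F), h) ⟨g, hU, hV⟩ g hU hV]
  have h23 : (∃ hm : Matches ν ω, Matches μ (charStar hm)) ↔ P3 := by
    constructor
    · rintro ⟨hm, hm2⟩ g h hU hV hW
      have hp : (g, (1 : I)) ∈ V ⋆ W := ⟨h, hV, hW⟩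
      have := hm2 g hU hp
      rw [charStar_apply hm (g, (1 : I)) hp h hV hW] at this
      rwa [← mul_assoc] at this
    · intro h3
      have hm : Matches ν ω := by
        intro h hV hW
        have hU : ((1 : F), (1 : G)) ∈ U := U.one_mem
        have := h3 1 h hU hV hW
        have e : (⟨((1 : F), (1 : G)), hU⟩ : U) = 1 := rfl
        rwa [e, map_one, one_mul] at this
      refine ⟨hm, ?_⟩
      intro g hU hp
      obtain ⟨h, hV, hW⟩ := hp
      rw [charStar_apply hm (g, (1 : I)) ⟨h, hV, hW⟩ h hV hW, ← mul_assoc]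
      exact h3 g h hU hV hW
  exact ⟨h13.trans h23.symm, h13⟩
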